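/- arXiv:1912.11252 — 2 statements merged into one kernel-verified Lean document; each statement's English description precedes it below -/
import Mathlib

section
/- Let ℋ be a measurable hypothesis space, L a loss function bounded in [0,1], S a sample set of size n ≥ 2, and δ ∈ (0,1). Define R̄(ξ, π, S) = R̂(ξ, S) + √((KL(ξ‖π) + ln(n/δ)) / (2(n−1))). Let ξ⁰ be a (non-informative) prior probability measure on ℋ, and suppose the batches of the sequential batch sampling algorithm all equal S, i.e. B₁ = B₂ = ⋯ = B_b = S. Let ξ₁ minimize ξ ↦ R̄(ξ, ξ⁰, S), and for each i = 2, …, b let ξ_i minimize ξ ↦ R̄(ξ, ξ_{i−1}, S) over probability measures on ℋ. Let ξ* be a minimizer of ξ ↦ R̄(ξ, ξ⁰, S). Then R̄(ξ_b, ξ_{b−1}, S) ≤ R̄(ξ*, ξ⁰, S). -/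
open MeasureTheory
open scoped Classical

/-- The Kullback–Leibler divergence `KL(ξ‖π)`, valued in `EReal`,
equal to `+∞` when `ξ` is not absolutely continuous with respect to `π` (or when the
log-likelihood ratio is not integrable). -/
noncomputable def klDiv {α : Type*} [MeasurableSpace α] (ξ π : Measure α) : EReal :=
  if ξ ≪ π ∧ Integrable (llr ξ π) ξ then ((∫ f, llr ξ π f ∂ξ : ℝ) : EReal) else ⊤

/-- The empirical risk `R̂(ξ, S) = E_{h∼ξ} (1/|S|) ∑ᵢ L(h, Sᵢ)` of a model
distribution `ξ` on the sample set `S` of size `n`. -/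
noncomputable def empRisk {ℋ Z : Type*} [MeasurableSpace ℋ]
    (L : ℋ → Z → ℝ) {n : ℕ} (S : Fin n → Z) (ξ : Measure ℋ) : ℝ :=
  ∫ h, (∑ i : Fin n, L h (S i)) / (n : ℝ) ∂ξ

/-- The PAC-Bayes bound functional
`R̄(ξ, π, S) = R̂(ξ, S) + √((KL(ξ‖π) + ln(n/δ)) / (2(n−1)))`, valued in `EReal`
(it equals `+∞` when `KL(ξ‖π) = +∞`). -/
noncomputable def Rbar {ℋ Z : Type*} [MeasurableSpace ℋ]
    (L : ℋ → Z → ℝ) (δ : ℝ) {n : ℕ} (S : Fin n → Z)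
    (ξ π : Measure ℋ) : EReal :=
  if klDiv ξ π = ⊤ then ⊤
  else ((empRisk L S ξ +
    Real.sqrt (((klDiv ξ π).toReal + Real.log ((n : ℝ) / δ)) /
      (2 * ((n : ℝ) - 1))) : ℝ) : EReal)

/-!
Since `KL(ξ‖ξ) = 0 ≤ KL(ξ‖π)`, replacing the prior of a probability measure by the measure
itself can only lower `R̄`. Hence `R̄(ξᵢ₊₁, ξᵢ) ≤ R̄(ξᵢ, ξᵢ) ≤ R̄(ξᵢ, ξᵢ₋₁)`, the first step by
minimality of `ξᵢ₊₁`, so the values `R̄(ξᵢ, ξᵢ₋₁)` decrease in `i`; and `R̄(ξ₁, ξ⁰) ≤ R̄(ξ*, ξ⁰)`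
because `ξ₁` minimizes the same functional as `ξ*`.
-/

section KullbackLeibler

variable {α : Type*} [MeasurableSpace α]

lemma klDiv_self (ξ : Measure α) [SigmaFinite ξ] : klDiv ξ ξ = 0 := by
  have hint : Integrable (llr ξ ξ) ξ := (integrable_zero _ _ _).congr (llr_self ξ).symm
  rw [klDiv, if_pos ⟨Measure.AbsolutelyContinuous.rfl, hint⟩, integral_congr_ae (llr_self ξ)]
  simp

/-- Gibbs' inequality; the junk value `(⊤ : EReal).toReal = 0` makes it hold off the support too. -/
lemma toReal_klDiv_nonneg (ξ π : Measure α) [IsProbabilityMeasure ξ] [IsProbabilityMeasure π] :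
    0 ≤ (klDiv ξ π).toReal := by
  unfold klDiv
  split_ifs with h
  · simpa using InformationTheory.integral_llr_add_sub_measure_univ_nonneg h.1 h.2
  · simp

end KullbackLeibler

section PACBayes

variable {ℋ Z : Type*} [MeasurableSpace ℋ] (L : ℋ → Z → ℝ) (δ : ℝ) {n : ℕ} (S : Fin n → Z)

lemma Rbar_self_le (hn : 1 ≤ n) (ξ π : Measure ℋ) [IsProbabilityMeasure ξ]
    [IsProbabilityMeasure π] : Rbar L δ S ξ ξ ≤ Rbar L δ S ξ π := by
  unfold Rbar
  by_cases htop : klDiv ξ π = ⊤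
  · simp [htop]
  rw [if_neg htop, klDiv_self, if_neg EReal.zero_ne_top, EReal.coe_le_coe_iff]
  have hden : (0 : ℝ) ≤ 2 * ((n : ℝ) - 1) := by
    have : (1 : ℝ) ≤ n := by exact_mod_cast hn
    linarith
  gcongr
  simpa using toReal_klDiv_nonneg ξ π

lemma Rbar_le_Rbar_prior_of_isMinimizer (hn : 1 ≤ n) {ξ π π₀ : Measure ℋ}
    [IsProbabilityMeasure π] [IsProbabilityMeasure π₀]
    (hξ : ∀ ρ : Measure ℋ, IsProbabilityMeasure ρ → Rbar L δ S ξ π ≤ Rbar L δ S ρ π) :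
    Rbar L δ S ξ π ≤ Rbar L δ S π π₀ :=
  (hξ π inferInstance).trans (Rbar_self_le L δ S hn π π₀)

end PACBayes

theorem Rbar_sequential_batch_sampling_general
    {ℋ Z : Type*} [MeasurableSpace ℋ]
    (L : ℋ → Z → ℝ)
    {n : ℕ} (hn : 2 ≤ n) (S : Fin n → Z)
    (δ : ℝ)
    (b : ℕ) (hb : 1 ≤ b)
    (ξ : ℕ → Measure ℋ) (hξ0 : IsProbabilityMeasure (ξ 0))
    (hξprob : ∀ i, 1 ≤ i → i ≤ b → IsProbabilityMeasure (ξ i))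
    (hξmin : ∀ i, 1 ≤ i → i ≤ b →
      ∀ ρ : Measure ℋ, IsProbabilityMeasure ρ →
        Rbar L δ S (ξ i) (ξ (i - 1)) ≤ Rbar L δ S ρ (ξ (i - 1)))
    (ξstar : Measure ℋ) (hξstar : IsProbabilityMeasure ξstar) :
    Rbar L δ S (ξ b) (ξ (b - 1)) ≤ Rbar L δ S ξstar (ξ 0) := by
  have hprob : ∀ i ≤ b, IsProbabilityMeasure (ξ i) := fun i hib => by
    rcases Nat.eq_zero_or_pos i with rfl | hi
    · exact hξ0
    · exact hξprob i hi hib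
  suffices ∀ i, 1 ≤ i → i ≤ b → Rbar L δ S (ξ i) (ξ (i - 1)) ≤ Rbar L δ S ξstar (ξ 0) from
    this b hb le_rfl
  intro i hi
  induction i, hi using Nat.le_induction with
  | base => exact fun h1b => hξmin 1 le_rfl h1b ξstar hξstar
  | succ i hi ih =>
    intro hib
    have := hprob i (by omega)
    have := hprob (i - 1) (by omega)
    exact (Rbar_le_Rbar_prior_of_isMinimizer L δ S (by omega) (π := ξ i)
      (hξmin (i + 1) (by omega) hib)).trans (ih (by omega))

/-- Proposition 1 of the paper.  Suppose the batches of the sequential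
batch sampling algorithm all equal `S`.  Writing `ξ 0` for the non-informative prior,
let `ξ 1` minimize `ξ ↦ R̄(ξ, ξ 0, S)` and, for `i = 2, …, b`, let `ξ i` minimize
`ξ ↦ R̄(ξ, ξ (i−1), S)` over probability measures on `ℋ`; let `ξ*` be a minimizer of
`ξ ↦ R̄(ξ, ξ 0, S)`.  Then `R̄(ξ b, ξ (b−1), S) ≤ R̄(ξ*, ξ 0, S)`. -/
theorem Rbar_sequential_batch_sampling
    {ℋ Z : Type*} [MeasurableSpace ℋ] [MeasurableSpace Z]
    (L : ℋ → Z → ℝ) (hL_meas : Measurable (Function.uncurry L))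
    (hL_bdd : ∀ h z, L h z ∈ Set.Icc (0 : ℝ) 1)
    {n : ℕ} (hn : 2 ≤ n) (S : Fin n → Z)
    (δ : ℝ) (hδ : δ ∈ Set.Ioo (0 : ℝ) 1)
    (b : ℕ) (hb : 1 ≤ b)
    (ξ : ℕ → Measure ℋ) (hξ0 : IsProbabilityMeasure (ξ 0))
    (hξprob : ∀ i, 1 ≤ i → i ≤ b → IsProbabilityMeasure (ξ i))
    (hξmin : ∀ i, 1 ≤ i → i ≤ b →
      ∀ ρ : Measure ℋ, IsProbabilityMeasure ρ →
        Rbar L δ S (ξ i) (ξ (i - 1)) ≤ Rbar L δ S ρ (ξ (i - 1)))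
    (ξstar : Measure ℋ) (hξstar : IsProbabilityMeasure ξstar)
    (hξstar_min : ∀ ρ : Measure ℋ, IsProbabilityMeasure ρ →
      Rbar L δ S ξstar (ξ 0) ≤ Rbar L δ S ρ (ξ 0)) :
    Rbar L δ S (ξ b) (ξ (b - 1)) ≤ Rbar L δ S ξstar (ξ 0) :=
  Rbar_sequential_batch_sampling_general L hn S δ b hb ξ hξ0 hξprob hξmin ξstar hξstar
end

section
/- Let q be the double-exponential (Laplace) density q(x) = (1/2) e^{−|x|}. Then for every 0 < s₀ < 1 and every t₀ > 0, there exists a constant B > 0 such that for all s with s₀ ≤ s ≤ s₀⁻¹ and all t with −t₀ ≤ t ≤ t₀, ∫ q(x) ln( q(x) / ((1/s) q((x−t)/s)) ) dx ≤ B((1−s)² + t²). -/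
/-!
The integral is the Kullback–Leibler divergence `log s + (|t| + e^{-|t|}) / s - 1`. The only
nontrivial ingredient is the first absolute moment `E|X - t| = |t| + e^{-|t|}` of a standard
Laplace variable `X`; since `X` is symmetric and `|x - t| + |x + t| = 2 max |x| |t|`, it equals
`∫₀^∞ e^{-x} max x |t| dx`. Then `log s - 1 + 1/s ≤ (1 - s)² / s` and
`|t| + e^{-|t|} - 1 ≤ t²` give the bound with `B = 1 / s₀`.
-/

open MeasureTheory Real Set Filter

lemma integrable_comp_abs {g : ℝ → ℝ} (hg : IntegrableOn g (Ioi 0)) :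
    Integrable (fun x => g |x|) := by
  have hpos : IntegrableOn (fun x => g |x|) (Ioi 0) :=
    hg.congr_fun (fun x hx => by rw [abs_of_pos hx]) measurableSet_Ioi
  have hneg : IntegrableOn (fun x => g |x|) (Iic 0) := by
    have hIci : IntegrableOn (fun x => g |x|) (Ici (-0)) := by
      rw [neg_zero, integrableOn_Ici_iff_integrableOn_Ioi enorm_ne_top]
      exact hpos
    simpa using hIci.comp_neg_Iic
  rw [← integrableOn_univ, ← Iic_union_Ioi (a := 0)]
  exact hneg.union hpos

lemma hasDerivAt_neg_add_one_mul_exp_neg (x : ℝ) :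
    HasDerivAt (fun y => -((y + 1) * exp (-y))) (x * exp (-x)) x := by
  refine (((hasDerivAt_id' x).add_const 1).fun_mul (hasDerivAt_neg x).exp).fun_neg.congr_deriv
    ?_
  ring

lemma tendsto_neg_add_one_mul_exp_neg_atTop :
    Tendsto (fun y => -((y + 1) * exp (-y))) atTop (nhds 0) := by
  have := ((tendsto_pow_mul_exp_neg_atTop_nhds_zero 1).add tendsto_exp_neg_atTop_nhds_zero).neg
  simpa [add_mul] using this

lemma integrableOn_Ioi_mul_exp_neg {a : ℝ} (ha : 0 ≤ a) :
    IntegrableOn (fun x => x * exp (-x)) (Ioi a) :=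
  integrableOn_Ioi_deriv_of_nonneg' (fun x _ => hasDerivAt_neg_add_one_mul_exp_neg x)
    (fun _ hx => mul_nonneg (ha.trans hx.out.le) (exp_pos _).le)
    tendsto_neg_add_one_mul_exp_neg_atTop

lemma integral_Ioi_mul_exp_neg {a : ℝ} (ha : 0 ≤ a) :
    ∫ x in Ioi a, x * exp (-x) = (a + 1) * exp (-a) := by
  rw [integral_Ioi_of_hasDerivAt_of_nonneg' (fun x _ => hasDerivAt_neg_add_one_mul_exp_neg x)
    (fun _ hx => mul_nonneg (ha.trans hx.out.le) (exp_pos _).le)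
    tendsto_neg_add_one_mul_exp_neg_atTop]
  ring

lemma eqOn_exp_neg_mul_max_Ioc (u : ℝ) :
    EqOn (fun x => exp (-x) * max x u) (fun x => u * exp (-x)) (Ioc 0 u) :=
  fun x hx => by simp [max_eq_right hx.2, mul_comm]

lemma eqOn_exp_neg_mul_max_Ioi (u : ℝ) :
    EqOn (fun x => exp (-x) * max x u) (fun x => x * exp (-x)) (Ioi u) :=
  fun x hx => by simp [max_eq_left hx.out.le, mul_comm]

lemma integrableOn_Ioi_exp_neg_mul_max {u : ℝ} (hu : 0 ≤ u) :
    IntegrableOn (fun x => exp (-x) * max x u) (Ioi 0) := by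
  rw [← Ioc_union_Ioi_eq_Ioi hu]
  refine IntegrableOn.union ?_ ?_
  · exact (by fun_prop : Continuous fun x => exp (-x) * max x u).integrableOn_Ioc
  · exact (integrableOn_Ioi_mul_exp_neg hu).congr_fun (eqOn_exp_neg_mul_max_Ioi u).symm
      measurableSet_Ioi

lemma integral_Ioi_exp_neg_mul_max {u : ℝ} (hu : 0 ≤ u) :
    ∫ x in Ioi 0, exp (-x) * max x u = u + exp (-u) := by
  have hint := integrableOn_Ioi_exp_neg_mul_max hu
  rw [← Ioc_union_Ioi_eq_Ioi hu] at hint ⊢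
  rw [setIntegral_union Ioc_disjoint_Ioi_same measurableSet_Ioi
      (hint.mono_set subset_union_left) (hint.mono_set subset_union_right),
    setIntegral_congr_fun measurableSet_Ioc (eqOn_exp_neg_mul_max_Ioc u),
    setIntegral_congr_fun measurableSet_Ioi (eqOn_exp_neg_mul_max_Ioi u),
    integral_Ioi_mul_exp_neg hu, integral_const_mul, ← intervalIntegral.integral_of_le hu,
    intervalIntegral.integral_comp_neg (fun x => exp x), integral_exp, neg_zero, exp_zero]
  ring

lemma abs_sub_add_abs_add (x t : ℝ) : |x - t| + |x + t| = 2 * max |x| |t| := by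
  grind

noncomputable def laplaceDensity (x : ℝ) : ℝ := 1 / 2 * exp (-|x|)

lemma integrable_laplaceDensity : Integrable laplaceDensity :=
  integrable_comp_abs (g := fun r => 1 / 2 * exp (-r))
    ((integrableOn_exp_neg_Ioi 0).const_mul _)

lemma integral_laplaceDensity : ∫ x, laplaceDensity x = 1 := by
  rw [show laplaceDensity = fun x => (fun r => 1 / 2 * exp (-r)) |x| from rfl, integral_comp_abs,
    integral_const_mul, integral_exp_neg_Ioi_zero]
  norm_num

lemma laplaceDensity_mul_abs_sub_add_comp_neg (x t : ℝ) :
    laplaceDensity x * |x - t| + laplaceDensity (-x) * |-x - t| = exp (-|x|) * max |x| |t| := by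
  rw [show -x - t = -(x + t) by ring, abs_neg, laplaceDensity, laplaceDensity, abs_neg]
  linear_combination 1 / 2 * exp (-|x|) * abs_sub_add_abs_add x t

lemma integrable_laplaceDensity_mul_abs_sub (t : ℝ) :
    Integrable (fun x => laplaceDensity x * |x - t|) := by
  refine (integrable_comp_abs (integrableOn_Ioi_exp_neg_mul_max (abs_nonneg t))).mono'
    (by unfold laplaceDensity; fun_prop) (Eventually.of_forall fun x => ?_)
  have h := laplaceDensity_mul_abs_sub_add_comp_neg x t
  have hneg : 0 ≤ laplaceDensity (-x) * |-x - t| := by unfold laplaceDensity; positivity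
  rw [norm_of_nonneg (by unfold laplaceDensity; positivity)]
  linarith

lemma integral_laplaceDensity_mul_abs_sub (t : ℝ) :
    ∫ x, laplaceDensity x * |x - t| = |t| + exp (-|t|) := by
  have hf := integrable_laplaceDensity_mul_abs_sub t
  have h2 : 2 * ∫ x, laplaceDensity x * |x - t| = 2 * (|t| + exp (-|t|)) := calc
    2 * ∫ x, laplaceDensity x * |x - t|
        = (∫ x, laplaceDensity x * |x - t|) + ∫ x, laplaceDensity (-x) * |-x - t| := by
      rw [integral_neg_eq_self (fun x => laplaceDensity x * |x - t|)]; ring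
    _ = ∫ x, exp (-|x|) * max |x| |t| := by
      rw [← integral_add hf hf.comp_neg]
      simp_rw [laplaceDensity_mul_abs_sub_add_comp_neg]
    _ = 2 * (|t| + exp (-|t|)) := by
      rw [integral_comp_abs (f := fun r => exp (-r) * max r |t|),
        integral_Ioi_exp_neg_mul_max (abs_nonneg t)]
  linarith

lemma log_laplaceDensity_div {s : ℝ} (hs : 0 < s) (x t : ℝ) :
    log (laplaceDensity x / ((1 / s) * laplaceDensity ((x - t) / s))) =
      log s + |x - t| / s - |x| := by
  have : laplaceDensity x / ((1 / s) * laplaceDensity ((x - t) / s)) =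
      s * exp (|x - t| / s - |x|) := by
    rw [laplaceDensity, laplaceDensity, abs_div, abs_of_pos hs, exp_sub, exp_neg, exp_neg]
    field_simp
  rw [this, log_mul hs.ne' (exp_ne_zero _), log_exp]
  ring

lemma integral_laplaceDensity_mul_log_div {s : ℝ} (hs : 0 < s) (t : ℝ) :
    ∫ x, laplaceDensity x * log (laplaceDensity x / ((1 / s) * laplaceDensity ((x - t) / s))) =
      log s + (|t| + exp (-|t|)) / s - 1 := by
  have hint := integrable_laplaceDensity_mul_abs_sub t
  have hint₀ : Integrable (fun x => laplaceDensity x * |x|) := by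
    simpa using integrable_laplaceDensity_mul_abs_sub 0
  have hmean₀ : ∫ x, laplaceDensity x * |x| = 1 := by
    simpa using integral_laplaceDensity_mul_abs_sub 0
  have hsplit : ∀ x, laplaceDensity x * (log s + |x - t| / s - |x|) =
      log s * laplaceDensity x + s⁻¹ * (laplaceDensity x * |x - t|) -
        laplaceDensity x * |x| := fun x => by ring
  simp_rw [log_laplaceDensity_div hs, hsplit]
  rw [integral_sub ((integrable_laplaceDensity.const_mul _).fun_add (hint.const_mul _)) hint₀,
    integral_add (integrable_laplaceDensity.const_mul _) (hint.const_mul _),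
    integral_const_mul, integral_const_mul, integral_laplaceDensity,
    integral_laplaceDensity_mul_abs_sub, hmean₀]
  ring

lemma log_add_one_div_sub_one_le {s : ℝ} (hs : 0 < s) :
    log s + 1 / s - 1 ≤ (1 - s) ^ 2 / s := by
  rw [le_div_iff₀ hs]
  have h := mul_le_mul_of_nonneg_left (log_le_sub_one_of_pos hs) hs.le
  have : (log s + 1 / s - 1) * s = s * log s + 1 - s := by field_simp
  nlinarith

lemma add_exp_neg_sub_one_le_sq {u : ℝ} (hu : 0 ≤ u) : u + exp (-u) - 1 ≤ u ^ 2 := by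
  have h : exp (-u) * (u + 1) ≤ 1 := by
    calc exp (-u) * (u + 1) ≤ exp (-u) * exp u := by gcongr; exact add_one_le_exp u
      _ = 1 := by rw [← exp_add, neg_add_cancel, exp_zero]
  nlinarith [exp_pos (-u)]

lemma log_add_div_sub_one_le {s : ℝ} (hs : 0 < s) (t : ℝ) :
    log s + (|t| + exp (-|t|)) / s - 1 ≤ ((1 - s) ^ 2 + t ^ 2) / s := by
  have ht := add_exp_neg_sub_one_le_sq (abs_nonneg t)
  rw [sq_abs] at ht
  calc log s + (|t| + exp (-|t|)) / s - 1
      = (log s + 1 / s - 1) + (|t| + exp (-|t|) - 1) / s := by ring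
    _ ≤ (1 - s) ^ 2 / s + t ^ 2 / s :=
      add_le_add (log_add_one_div_sub_one_le hs) (div_le_div_of_nonneg_right ht hs.le)
    _ = ((1 - s) ^ 2 + t ^ 2) / s := by ring

/-- The double-exponential (Laplace) density satisfies the regularization
condition (C2): for each `0 < s₀ < 1` and `t₀ > 0` there is a constant `B > 0` such that
`∫ q(x) ln(q(x) / ((1/s) q((x−t)/s))) dx ≤ B((1−s)² + t²)` for all `s₀ ≤ s ≤ s₀⁻¹`,
`−t₀ ≤ t ≤ t₀`. -/
theorem laplace_satisfies_C2
    (q : ℝ → ℝ) (hq : ∀ x, q x = (1 / 2) * Real.exp (-|x|)) :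
    ∀ s₀ ∈ Set.Ioo (0 : ℝ) 1, ∀ t₀ > (0 : ℝ), ∃ B > (0 : ℝ),
      ∀ s ∈ Set.Icc s₀ s₀⁻¹, ∀ t ∈ Set.Icc (-t₀) t₀,
        ∫ x : ℝ, q x * Real.log (q x / ((1 / s) * q ((x - t) / s))) ≤
          B * ((1 - s) ^ 2 + t ^ 2) := by
  obtain rfl : q = laplaceDensity := funext hq
  intro s₀ hs₀ t₀ _
  refine ⟨s₀⁻¹, inv_pos.mpr hs₀.1, fun s hs t _ => ?_⟩
  have hs_pos : 0 < s := hs₀.1.trans_le hs.1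
  rw [integral_laplaceDensity_mul_log_div hs_pos]
  calc log s + (|t| + exp (-|t|)) / s - 1
      ≤ ((1 - s) ^ 2 + t ^ 2) / s := log_add_div_sub_one_le hs_pos t
    _ ≤ ((1 - s) ^ 2 + t ^ 2) / s₀ := div_le_div_of_nonneg_left (by positivity) hs₀.1 hs.1
    _ = s₀⁻¹ * ((1 - s) ^ 2 + t ^ 2) := div_eq_inv_mul _ _
end
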